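/- Let a,b≥0 with ab<1. Fix d∈ℕ and 0<θ₁<…<θ_d<θ_{d+1}=1, and let cone° := {x=(x₁,…,x_{d+1})∈ℝ^{d+1} : 0 < x_j−x_{j−1} < θ_j−θ_{j−1} for j=1,…,d+1, with the conventions x₀:=0 and θ₀:=0}. Then for every open subset U ⊆ ℝ^{d+1}, inf_{x∈U} I^{(a,b)}_{θ₁,…,θ_{d+1}}(x) = inf_{x∈U∩cone°} I^{(a,b)}_{θ₁,…,θ_{d+1}}(x). -/

import Mathlib

open scoped Classical

/-- The space `C₀([0,1],ℝ)` of continuous functions on `[0,1]` vanishing at `0`, with the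
supremum-norm (uniform) topology. -/
abbrev C0Sp : Type := {f : C(Set.Icc (0:ℝ) 1, ℝ) // f ⟨0, Set.left_mem_Icc.mpr zero_le_one⟩ = 0}

/-- Extension of `f : C([0,1],ℝ)` to `ℝ` by clamping the argument to `[0,1]`. -/
noncomputable def extendF (f : C(Set.Icc (0:ℝ) 1, ℝ)) : ℝ → ℝ :=
  fun t => f (Set.projIcc 0 1 zero_le_one t)

/-- Evaluation of `f ∈ C₀([0,1],ℝ)` at `t ∈ [0,1]`. -/
noncomputable def evalC0 (f : C0Sp) (t : ℝ) : ℝ := extendF f.val t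

/-- The convex envelope on `[0,1]`: the largest convex function below `F` on `[0,1]`. -/
noncomputable def convEnv (F : ℝ → ℝ) : ℝ → ℝ := fun x =>
  sSup {y : ℝ | ∃ g : ℝ → ℝ, ConvexOn ℝ (Set.Icc (0:ℝ) 1) g ∧
    (∀ t ∈ Set.Icc (0:ℝ) 1, g t ≤ F t) ∧ y = g x}

/-- The entropy function `H(x) = x log x + (1-x) log(1-x)` (for `x ∈ [0,1]`;
note `Real.log 0 = 0` implements the convention `0·log 0 = 0`). -/
noncomputable def Hent (x : ℝ) : ℝ := x * Real.log x + (1 - x) * Real.log (1 - x)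

/-- `J(a,b)`. -/
noncomputable def Jfun (a b : ℝ) : ℝ :=
  if 1 < a then a / (1 + a) ^ 2 else if 1 < b then b / (1 + b) ^ 2 else 1 / 4

/-- `G_*(x) = min(max(f̃'(x), a/(1+a)), 1/(1+b))`, where `f̃` is the convex envelope of `F`. -/
noncomputable def Gstar (a b : ℝ) (F : ℝ → ℝ) (x : ℝ) : ℝ :=
  min (max (deriv (convEnv F) x) (a / (1 + a))) (1 / (1 + b))

/-- The rate function `I^{(a,b)} : C₀([0,1],ℝ) → [0,∞]` of Theorem 1.2.  A function
`f : [0,1] → ℝ` with `f(0)=0` is absolutely continuous with `0 ≤ f' ≤ 1` a.e. if and only if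
it is nondecreasing and 1-Lipschitz, in which case `f'` (defined a.e.) is `deriv f`. -/
noncomputable def rateI (a b : ℝ) (f : C0Sp) : EReal :=
  if MonotoneOn (extendF f.val) (Set.Icc (0:ℝ) 1) ∧
      LipschitzOnWith 1 (extendF f.val) (Set.Icc (0:ℝ) 1) then
    (((∫ x in (0:ℝ)..1, Hent (deriv (extendF f.val) x)) +
      (∫ x in (0:ℝ)..1,
        (deriv (convEnv (extendF f.val)) x * Real.log (Gstar a b (extendF f.val) x) +
          (1 - deriv (convEnv (extendF f.val)) x) *
            Real.log (1 - Gstar a b (extendF f.val) x))) -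
      Real.log (Jfun a b) : ℝ) : EReal)
  else ⊤

/-- The finite-dimensional rate function
`I^{(a,b)}_{θ₁,…,θ_{d+1}}(x) = inf{ I^{(a,b)}(f) : f ∈ C₀([0,1],ℝ), f(θ_j) = x_j ∀j }`. -/
noncomputable def rateFd (a b : ℝ) (k : ℕ) (θ : Fin (k+1) → ℝ) (x : Fin (k+1) → ℝ) : EReal :=
  ⨅ f : {f : C0Sp // ∀ j, evalC0 f (θ j) = x j}, rateI a b f.val

/-!
Fix `x ∈ U` and a path `f` with `f(θⱼ) = xⱼ` and finite rate. For small `η > 0` the path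
`f_η = (1 - η) f + (η/2) id` has all increments strictly between `0` and `θⱼ - θⱼ₋₁`, so
`f_η(θ)` lies in `U ∩ cone°`. The convex envelope of `f_η` is `(1 - η) f̃ + (η/2) id`, so both
integrands of the rate function are evaluated at `(1 - η) v + η/2` instead of at `v = f'`,
resp. `v = f̃'`, which costs at most `O(η)` uniformly in `v ∈ [0,1]`. Letting `η → 0` gives
`I(f) ≥ inf_{U ∩ cone°} I`.
-/

open Set Filter Topology MeasureTheory

def UnitSlopeOn (F : ℝ → ℝ) (s : Set ℝ) : Prop :=
  ∀ ⦃u⦄, u ∈ s → ∀ ⦃v⦄, v ∈ s → u ≤ v → F u ≤ F v ∧ F v - F u ≤ v - u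

section UnitSlope

variable {F G : ℝ → ℝ} {s : Set ℝ}

theorem unitSlopeOn_iff : UnitSlopeOn F s ↔ MonotoneOn F s ∧ LipschitzOnWith 1 F s := by
  refine ⟨fun h => ⟨fun u hu v hv huv => (h hu hv huv).1, .of_dist_le_mul fun u hu v hv => ?_⟩,
    fun ⟨hM, hL⟩ u hu v hv huv => ⟨hM hu hv huv, ?_⟩⟩
  · rw [NNReal.coe_one, one_mul, Real.dist_eq, Real.dist_eq]
    rcases le_total u v with huv | hvu
    · have := h hu hv huv
      rw [abs_sub_comm, abs_of_nonneg (by linarith), abs_sub_comm, abs_of_nonneg (by linarith)]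
      exact this.2
    · have := h hv hu hvu
      rw [abs_of_nonneg (by linarith), abs_of_nonneg (by linarith)]
      exact this.2
  · have := hL.dist_le_mul v hv u hu
    rw [NNReal.coe_one, one_mul, Real.dist_eq, Real.dist_eq] at this
    exact (le_abs_self _).trans (this.trans (abs_of_nonneg (sub_nonneg.mpr huv)).le)

theorem UnitSlopeOn.congr (hF : UnitSlopeOn F s) (h : EqOn G F s) : UnitSlopeOn G s := by
  intro u hu v hv huv
  rw [h hu, h hv]
  exact hF hu hv huv

theorem UnitSlopeOn.perturb (hF : UnitSlopeOn F s) {η : ℝ} (hη0 : 0 ≤ η) (hη1 : η ≤ 1) :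
    UnitSlopeOn (fun t => (1 - η) * F t + η / 2 * t) s := by
  intro u hu v hv huv
  obtain ⟨h1, h2⟩ := hF hu hv huv
  constructor <;> nlinarith

theorem UnitSlopeOn.slope_mem_Icc (hF : UnitSlopeOn F s) {u v : ℝ} (hu : u ∈ s) (hv : v ∈ s)
    (huv : u ≠ v) : slope F u v ∈ Icc 0 1 := by
  wlog hlt : u < v generalizing u v
  · rw [slope_comm]
    exact this hv hu huv.symm (huv.symm.lt_of_le (not_lt.mp hlt))
  obtain ⟨h1, h2⟩ := hF hu hv hlt.le
  rw [slope_def_field]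
  exact ⟨div_nonneg (by linarith) (by linarith), (div_le_one (by linarith)).mpr h2⟩

theorem UnitSlopeOn.deriv_mem_Icc (hF : UnitSlopeOn F s) {x : ℝ} (hs : s ∈ 𝓝 x) :
    deriv F x ∈ Icc 0 1 := by
  by_cases hd : DifferentiableAt ℝ F x
  · refine isClosed_Icc.mem_of_tendsto (hasDerivAt_iff_tendsto_slope.mp hd.hasDerivAt) ?_
    filter_upwards [self_mem_nhdsWithin, nhdsWithin_le_nhds hs] with y hy hys
    exact hF.slope_mem_Icc (mem_of_mem_nhds hs) hys (Ne.symm hy)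
  · rw [deriv_zero_of_not_differentiableAt hd]
    exact ⟨le_rfl, zero_le_one⟩

theorem ConvexOn.unitSlopeOn_Icc {a b : ℝ} (hG : ConvexOn ℝ (Icc a b) G)
    (ha : ∀ t ∈ Icc a b, G a ≤ G t) (hb : ∀ t ∈ Icc a b, G b - G t ≤ b - t) :
    UnitSlopeOn G (Icc a b) := by
  intro u hu v hv huv
  rcases huv.eq_or_lt with rfl | huv
  · simp
  have hmem_a : a ∈ Icc a b := left_mem_Icc.mpr (hu.1.trans hu.2)
  have hmem_b : b ∈ Icc a b := right_mem_Icc.mpr (hu.1.trans hu.2)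
  constructor
  · rcases hu.1.eq_or_lt with rfl | hau
    · exact ha v hv
    have hslope := hG.slope_mono_adjacent hmem_a hv hau huv
    have h0 : 0 ≤ (G u - G a) / (u - a) := div_nonneg (by linarith [ha u hu]) (by linarith)
    have := h0.trans hslope
    rwa [le_div_iff₀ (by linarith), zero_mul, sub_nonneg] at this
  · rcases hv.2.eq_or_lt with rfl | hvb
    · exact hb u hu
    have hslope := hG.slope_mono_adjacent hu hmem_b huv hvb
    have : (G b - G v) / (b - v) ≤ 1 := (div_le_one (by linarith)).mpr (hb v hv)
    exact (div_le_one (by linarith)).mp (hslope.trans this)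

end UnitSlope

section ConvexEnvelope

def HasConvexMinorant (F : ℝ → ℝ) : Prop :=
  ∃ g : ℝ → ℝ, ConvexOn ℝ (Icc 0 1) g ∧ ∀ t ∈ Icc (0 : ℝ) 1, g t ≤ F t

variable {F G g : ℝ → ℝ} {x : ℝ}

theorem le_convEnv (hg : ConvexOn ℝ (Icc 0 1) g) (hgF : ∀ t ∈ Icc (0 : ℝ) 1, g t ≤ F t)
    (hx : x ∈ Icc (0 : ℝ) 1) : g x ≤ convEnv F x :=
  le_csSup ⟨F x, by rintro _ ⟨g, -, hgF, rfl⟩; exact hgF x hx⟩ ⟨g, hg, hgF, rfl⟩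

theorem convEnv_le_of_forall_le {c : ℝ} (hF : HasConvexMinorant F)
    (h : ∀ g : ℝ → ℝ, ConvexOn ℝ (Icc 0 1) g → (∀ t ∈ Icc (0 : ℝ) 1, g t ≤ F t) → g x ≤ c) :
    convEnv F x ≤ c := by
  obtain ⟨g₀, hg₀, hg₀F⟩ := hF
  exact csSup_le ⟨_, g₀, hg₀, hg₀F, rfl⟩ fun _ ⟨g, hg, hgF, hy⟩ => hy ▸ h g hg hgF

theorem convEnv_le (hF : HasConvexMinorant F) (hx : x ∈ Icc (0 : ℝ) 1) : convEnv F x ≤ F x :=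
  convEnv_le_of_forall_le hF fun _ _ hgF => hgF x hx

theorem convexOn_convEnv (hF : HasConvexMinorant F) : ConvexOn ℝ (Icc 0 1) (convEnv F) := by
  refine ⟨convex_Icc 0 1, fun u hu v hv p q hp hq hpq => convEnv_le_of_forall_le hF ?_⟩
  intro g hg hgF
  calc g (p • u + q • v) ≤ p • g u + q • g v := hg.2 hu hv hp hq hpq
    _ ≤ p • convEnv F u + q • convEnv F v := by
      gcongr
      exacts [le_convEnv hg hgF hu, le_convEnv hg hgF hv]

theorem convEnv_congr (h : EqOn F G (Icc 0 1)) : convEnv F = convEnv G := by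
  funext x
  unfold convEnv
  congr! 6 with g
  exact and_congr_left' (forall₂_congr fun t ht => by rw [h ht])

theorem ConvexOn.mul_add_affine {c e d : ℝ} (hg : ConvexOn ℝ (Icc 0 1) g) (hc : 0 ≤ c) :
    ConvexOn ℝ (Icc 0 1) (fun t => c * g t + (e * t + d)) :=
  (hg.smul hc).add ((LinearMap.mul ℝ ℝ e).convexOn (convex_Icc 0 1) |>.add_const d)

theorem HasConvexMinorant.mul_add_affine (hF : HasConvexMinorant F) {c : ℝ} (hc : 0 ≤ c)
    (e d : ℝ) : HasConvexMinorant (fun t => c * F t + (e * t + d)) := by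
  obtain ⟨g, hg, hgF⟩ := hF
  exact ⟨_, hg.mul_add_affine hc, fun t ht => by dsimp only; gcongr; exact hgF t ht⟩

theorem mul_convEnv_add_le {c e d : ℝ} (hc : 0 < c) (hF : HasConvexMinorant F)
    (hx : x ∈ Icc (0 : ℝ) 1) :
    c * convEnv F x + (e * x + d) ≤ convEnv (fun t => c * F t + (e * t + d)) x := by
  rw [← le_sub_iff_add_le, mul_comm, ← le_div_iff₀ hc]
  refine convEnv_le_of_forall_le hF fun g hg hgF => ?_
  rw [le_div_iff₀ hc, le_sub_iff_add_le, mul_comm]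
  exact le_convEnv (hg.mul_add_affine hc.le) (fun t ht => by gcongr; exact hgF t ht) hx

theorem convEnv_mul_add {c e d : ℝ} (hc : 0 < c) (hF : HasConvexMinorant F)
    (hx : x ∈ Icc (0 : ℝ) 1) :
    convEnv (fun t => c * F t + (e * t + d)) x = c * convEnv F x + (e * x + d) := by
  refine le_antisymm ?_ (mul_convEnv_add_le hc hF hx)
  have key := mul_convEnv_add_le (inv_pos.mpr hc) (e := -e / c) (d := -d / c)
    (hF.mul_add_affine hc.le e d) hx
  have hinv : (fun t => c⁻¹ * (c * F t + (e * t + d)) + (-e / c * t + -d / c)) = F := by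
    funext t
    field_simp
    ring
  rw [hinv] at key
  have := mul_le_mul_of_nonneg_left key hc.le
  field_simp at this
  linarith

end ConvexEnvelope

section UnitSlopeEnvelope

variable {F : ℝ → ℝ}

theorem UnitSlopeOn.hasConvexMinorant (hF : UnitSlopeOn F (Icc 0 1)) : HasConvexMinorant F :=
  ⟨fun _ => F 0, convexOn_const _ (convex_Icc 0 1),
    fun _ ht => (hF (left_mem_Icc.mpr zero_le_one) ht ht.1).1⟩

theorem UnitSlopeOn.convEnv (hF : UnitSlopeOn F (Icc 0 1)) :
    UnitSlopeOn (convEnv F) (Icc 0 1) := by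
  have hmin := hF.hasConvexMinorant
  have h0 : (0 : ℝ) ∈ Icc (0 : ℝ) 1 := left_mem_Icc.mpr zero_le_one
  have h1 : (1 : ℝ) ∈ Icc (0 : ℝ) 1 := right_mem_Icc.mpr zero_le_one
  refine (convexOn_convEnv hmin).unitSlopeOn_Icc (fun t ht => ?_) (fun t ht => ?_)
  · exact (convEnv_le hmin h0).trans
      (le_convEnv (convexOn_const _ (convex_Icc 0 1)) (fun s hs => (hF h0 hs hs.1).1) ht)
  · have hline : t + (F 1 - 1) ≤ _root_.convEnv F t :=
      le_convEnv (g := fun s => s + (F 1 - 1)) ((convexOn_id (convex_Icc 0 1)).add_const _)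
        (fun s hs => by linarith [(hF hs h1 hs.2).2]) ht
    linarith [convEnv_le hmin h1]

end UnitSlopeEnvelope

section BernoulliLogLik

open Real

noncomputable def bernoulliLogLik (q c : ℝ) : ℝ := q * log c + (1 - q) * log (1 - c)

theorem bernoulliLogLik_nonpos {q c : ℝ} (hq : q ∈ Icc (0 : ℝ) 1) (hc : c ∈ Icc (0 : ℝ) 1) :
    bernoulliLogLik q c ≤ 0 := by
  have := log_nonpos hc.1 hc.2
  have := log_nonpos (sub_nonneg.mpr hc.2) (by linarith [hc.1])
  unfold bernoulliLogLik
  nlinarith [hq.1, hq.2]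

/-- Gibbs' inequality: `bernoulliLogLik q` is unimodal with its maximum at `q`. -/
theorem bernoulliLogLik_le_of_mul_nonpos {q G c : ℝ} (hq : q ∈ Icc (0 : ℝ) 1)
    (hG : G ∈ Ioo (0 : ℝ) 1) (hc : c ∈ Icc (0 : ℝ) 1) (hsign : (G - c) * (q - c) ≤ 0) :
    bernoulliLogLik q G ≤ bernoulliLogLik q c := by
  obtain ⟨hq0, hq1⟩ := hq
  obtain ⟨hG0, hG1⟩ := hG
  unfold bernoulliLogLik
  rcases hc.1.eq_or_lt with rfl | hc0
  · obtain rfl : q = 0 := le_antisymm (by nlinarith) hq0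
    simpa using log_nonpos (by linarith) (by linarith)
  rcases hc.2.eq_or_lt with rfl | hc1
  · obtain rfl : q = 1 := le_antisymm hq1 (by nlinarith)
    simpa using log_nonpos hG0.le hG1.le
  have l1 : log G - log c ≤ G / c - 1 := by
    rw [← log_div hG0.ne' hc0.ne']
    exact log_le_sub_one_of_pos (div_pos hG0 hc0)
  have l2 : log (1 - G) - log (1 - c) ≤ (1 - G) / (1 - c) - 1 := by
    rw [← log_div (by linarith) (by linarith)]
    exact log_le_sub_one_of_pos (div_pos (by linarith) (by linarith))
  have hlin : q * (G / c - 1) + (1 - q) * ((1 - G) / (1 - c) - 1)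
      = (G - c) * (q - c) / (c * (1 - c)) := by
    field_simp
    ring
  have hsum : q * (G / c - 1) + (1 - q) * ((1 - G) / (1 - c) - 1) ≤ 0 := by
    rw [hlin]
    exact div_nonpos_of_nonpos_of_nonneg hsign (by nlinarith)
  nlinarith [mul_le_mul_of_nonneg_left l1 hq0,
    mul_le_mul_of_nonneg_left l2 (sub_nonneg.mpr hq1)]

noncomputable def clampedLogLik (α β v : ℝ) : ℝ := bernoulliLogLik v (min (max v α) β)

variable {α β v : ℝ}

theorem neg_le_clampedLogLik (hα0 : 0 ≤ α) (hα1 : α < 1) (hβ0 : 0 < β) (hβ1 : β ≤ 1)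
    (hv : v ∈ Icc (0 : ℝ) 1) : -(2 - log β - log (1 - α)) ≤ clampedLogLik α β v := by
  obtain ⟨hv0, hv1⟩ := hv
  set c := min (max v α) β
  have hlogβ : log β ≤ 0 := log_nonpos hβ0.le hβ1
  have hlogα : log (1 - α) ≤ 0 := log_nonpos (by linarith) (by linarith)
  have T1 : log β - 1 ≤ v * log c := by
    by_cases hvc : v ≤ c
    · rcases hv0.eq_or_lt with rfl | hvpos
      · simp; linarith
      · nlinarith [log_le_log hvpos hvc, self_sub_one_le_mul_log hv0]
    · have : c = β := by
        refine min_eq_right ?_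
        by_contra! h
        exact hvc ((le_max_left v α).trans (min_eq_left h.le).ge)
      rw [this]
      nlinarith
  have T2 : log (1 - α) - 1 ≤ (1 - v) * log (1 - c) := by
    by_cases hcv : c ≤ v
    · rcases hv1.eq_or_lt with rfl | hv1
      · simp; linarith
      · nlinarith [log_le_log (by linarith) (by linarith : 1 - v ≤ 1 - c),
          self_sub_one_le_mul_log (by linarith : 0 ≤ 1 - v)]
    · have hvα : v ≤ α := by
        by_contra! h
        exact hcv ((min_le_left _ _).trans (max_eq_left h.le).le)
      have hcα : c ≤ α := (min_le_left _ _).trans (max_le hvα le_rfl)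
      nlinarith [log_le_log (by linarith) (by linarith : 1 - α ≤ 1 - c)]
  unfold clampedLogLik bernoulliLogLik
  linarith

theorem abs_clampedLogLik_le (hα0 : 0 ≤ α) (hα1 : α < 1) (hβ0 : 0 < β) (hβ1 : β ≤ 1)
    (hv : v ∈ Icc (0 : ℝ) 1) : |clampedLogLik α β v| ≤ 2 - log β - log (1 - α) := by
  have hc : min (max v α) β ∈ Icc (0 : ℝ) 1 :=
    ⟨le_min (hv.1.trans (le_max_left _ _)) hβ0.le, (min_le_right _ _).trans hβ1⟩
  have := neg_le_clampedLogLik hα0 hα1 hβ0 hβ1 hv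
  have : clampedLogLik α β v ≤ 0 := bernoulliLogLik_nonpos hv hc
  have := log_nonpos hβ0.le hβ1
  have := log_nonpos (by linarith) (by linarith : 1 - α ≤ 1)
  exact abs_le.mpr ⟨by linarith, by linarith⟩

theorem sub_mul_sub_clamp_nonpos {y : ℝ} (hαβ : α ≤ β) (hy : y ∈ Icc α β) :
    (y - min (max v α) β) * (v - min (max v α) β) ≤ 0 := by
  rcases le_total v α with hvα | hαv
  · rw [max_eq_right hvα, min_eq_left hαβ]
    nlinarith [hy.1]
  rcases le_total v β with hvβ | hβv
  · simp [max_eq_left hαv, min_eq_left hvβ]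
  · rw [max_eq_left hαv, min_eq_right hβv]
    nlinarith [hy.2]

/-- For a fixed clamp level the log-likelihood is affine in `v`, and by Gibbs' inequality
re-clamping at the new argument can only lower it. -/
theorem clampedLogLik_perturb_le (hα0 : 0 ≤ α) (hα1 : α < 1) (hβ0 : 0 < β) (hβ1 : β ≤ 1)
    (hαβ : α ≤ β) {η : ℝ} (hη0 : 0 < η) (hη1 : η ≤ 1) (hv : v ∈ Icc (0 : ℝ) 1) :
    clampedLogLik α β ((1 - η) * v + η / 2) ≤
      clampedLogLik α β v + η * (2 - log β - log (1 - α)) := by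
  obtain ⟨hv0, hv1⟩ := hv
  have hp0 : 0 < (1 - η) * v + η / 2 := by nlinarith
  have hp1 : (1 - η) * v + η / 2 < 1 := by
    nlinarith [mul_nonneg (sub_nonneg.mpr hη1) (sub_nonneg.mpr hv1)]
  set p := (1 - η) * v + η / 2
  set G := min (max p α) β
  have hG : G ∈ Ioo (0 : ℝ) 1 :=
    ⟨lt_min (hp0.trans_le (le_max_left _ _)) hβ0, (min_le_left _ _).trans_lt (max_lt hp1 hα1)⟩
  have hc : min (max v α) β ∈ Icc (0 : ℝ) 1 :=
    ⟨le_min (hv0.trans (le_max_left _ _)) hβ0.le, (min_le_right _ _).trans hβ1⟩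
  have hgibbs := bernoulliLogLik_le_of_mul_nonpos ⟨hv0, hv1⟩ hG hc
    (sub_mul_sub_clamp_nonpos hαβ ⟨le_min (le_max_right _ _) hαβ, min_le_right _ _⟩)
  have hhalf := bernoulliLogLik_nonpos (q := 1 / 2) (by norm_num) (Ioo_subset_Icc_self hG)
  have hlb := neg_le_clampedLogLik hα0 hα1 hβ0 hβ1 ⟨hv0, hv1⟩
  have hsplit : bernoulliLogLik p G
      = (1 - η) * bernoulliLogLik v G + η * bernoulliLogLik (1 / 2) G := by
    unfold bernoulliLogLik
    ring
  unfold clampedLogLik at hlb ⊢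
  rw [hsplit]
  nlinarith

theorem Hent_eq_clampedLogLik (hv : v ∈ Icc (0 : ℝ) 1) : Hent v = clampedLogLik 0 1 v := by
  rw [clampedLogLik, max_eq_left hv.1, min_eq_left hv.2]
  rfl

theorem abs_Hent_le (hv : v ∈ Icc (0 : ℝ) 1) : |Hent v| ≤ 2 := by
  simpa [Hent_eq_clampedLogLik hv] using
    abs_clampedLogLik_le le_rfl zero_lt_one zero_lt_one le_rfl hv

theorem Hent_perturb_le {η : ℝ} (hη0 : 0 < η) (hη1 : η ≤ 1) (hv : v ∈ Icc (0 : ℝ) 1) :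
    Hent ((1 - η) * v + η / 2) ≤ Hent v + η * 2 := by
  have hp : (1 - η) * v + η / 2 ∈ Icc (0 : ℝ) 1 := 
    ⟨by nlinarith [hv.1], by nlinarith [mul_nonneg (sub_nonneg.mpr hη1) (sub_nonneg.mpr hv.2)]⟩
  simpa [Hent_eq_clampedLogLik hv, Hent_eq_clampedLogLik hp] using
    clampedLogLik_perturb_le le_rfl zero_lt_one zero_lt_one le_rfl zero_le_one hη0 hη1 hv

end BernoulliLogLik

section DerivativeIntegrals

variable {A B φ : ℝ → ℝ} {η C : ℝ}

theorem deriv_eq_or_of_eventuallyEq {x c e : ℝ} (hc : c ≠ 0)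
    (h : B =ᶠ[𝓝 x] fun t => c * A t + e * t) :
    deriv B x = c * deriv A x + e ∨ deriv B x = 0 ∧ deriv A x = 0 := by
  rw [h.deriv_eq]
  by_cases hA : DifferentiableAt ℝ A x
  · left
    exact ((hA.hasDerivAt.const_mul c).add ((hasDerivAt_id x).const_mul e)).deriv.trans
      (by rw [mul_one])
  · refine .inr ⟨deriv_zero_of_not_differentiableAt fun hB => hA ?_,
      deriv_zero_of_not_differentiableAt hA⟩
    have hA_eq : A = fun t => c⁻¹ * ((c * A t + e * t) - e * t) := by
      funext t
      field_simp
      ring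
    rw [hA_eq]
    exact (hB.sub (differentiableAt_id.const_mul e)).const_mul c⁻¹

theorem comp_deriv_le_of_eventuallyEq {x : ℝ} (hη0 : 0 ≤ η) (hη1 : η < 1) (hC : 0 ≤ C)
    (hφ : ∀ v ∈ Icc (0 : ℝ) 1, φ ((1 - η) * v + η / 2) ≤ φ v + η * C)
    (h : B =ᶠ[𝓝 x] fun t => (1 - η) * A t + η / 2 * t) (hA : deriv A x ∈ Icc (0 : ℝ) 1) :
    φ (deriv B x) ≤ φ (deriv A x) + η * C := by
  rcases deriv_eq_or_of_eventuallyEq (by linarith : 1 - η ≠ 0) h with hB | ⟨hB, hA0⟩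
  · rw [hB]
    exact hφ _ hA
  · rw [hB, hA0]
    linarith [mul_nonneg hη0 hC]

theorem intervalIntegrable_of_abs_le_on_Ioo {f : ℝ → ℝ} {a b : ℝ} (hab : a ≤ b)
    (hf : AEStronglyMeasurable f) (hfC : ∀ t ∈ Ioo a b, |f t| ≤ C) :
    IntervalIntegrable f volume a b := by
  rw [intervalIntegrable_iff_integrableOn_Ioo_of_le hab]
  exact Measure.integrableOn_of_bounded (M := C) measure_Ioo_lt_top.ne hf
    ((ae_restrict_iff' measurableSet_Ioo).mpr (ae_of_all _ hfC))

theorem integral_comp_deriv_le (hφm : Measurable φ) (hφC : ∀ v ∈ Icc (0 : ℝ) 1, |φ v| ≤ C)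
    (hη0 : 0 ≤ η) (hη1 : η < 1)
    (hφ : ∀ v ∈ Icc (0 : ℝ) 1, φ ((1 - η) * v + η / 2) ≤ φ v + η * C)
    (hA : UnitSlopeOn A (Icc 0 1))
    (hAB : EqOn B (fun t => (1 - η) * A t + η / 2 * t) (Icc 0 1)) :
    ∫ t in (0 : ℝ)..1, φ (deriv B t) ≤ (∫ t in (0 : ℝ)..1, φ (deriv A t)) + η * C := by
  have hB : UnitSlopeOn B (Icc 0 1) := (hA.perturb hη0 hη1.le).congr hAB
  have hC : 0 ≤ C := (abs_nonneg _).trans (hφC 0 (left_mem_Icc.mpr zero_le_one))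
  have hderiv {F : ℝ → ℝ} (hF : UnitSlopeOn F (Icc 0 1)) {t : ℝ} (ht : t ∈ Ioo (0 : ℝ) 1) :
      deriv F t ∈ Icc (0 : ℝ) 1 :=
    hF.deriv_mem_Icc (Icc_mem_nhds ht.1 ht.2)
  have hint {F : ℝ → ℝ} (hF : UnitSlopeOn F (Icc 0 1)) :
      IntervalIntegrable (fun t => φ (deriv F t)) volume 0 1 :=
    intervalIntegrable_of_abs_le_on_Ioo zero_le_one
      (hφm.comp (measurable_deriv F)).aestronglyMeasurable fun t ht => hφC _ (hderiv hF ht)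
  calc ∫ t in (0 : ℝ)..1, φ (deriv B t) ≤ ∫ t in (0 : ℝ)..1, (φ (deriv A t) + η * C) := by
        refine intervalIntegral.integral_mono_on_of_le_Ioo zero_le_one (hint hB)
          ((hint hA).add intervalIntegrable_const) fun t ht => ?_
        refine comp_deriv_le_of_eventuallyEq hη0 hη1 hC hφ ?_ (hderiv hA ht)
        exact eventuallyEq_of_mem (Ioo_mem_nhds ht.1 ht.2) fun s hs => hAB (Ioo_subset_Icc_self hs)
    _ = (∫ t in (0 : ℝ)..1, φ (deriv A t)) + η * C := by
        simp [intervalIntegral.integral_add (hint hA) intervalIntegrable_const]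

end DerivativeIntegrals

section RateFunction

noncomputable def rateValue (a b : ℝ) (F : ℝ → ℝ) : ℝ :=
  (∫ x in (0 : ℝ)..1, Hent (deriv F x)) +
    (∫ x in (0 : ℝ)..1, clampedLogLik (a / (1 + a)) (1 / (1 + b)) (deriv (convEnv F) x)) -
    Real.log (Jfun a b)

variable {a b η : ℝ}

theorem rateI_eq_rateValue {f : C0Sp} (hf : UnitSlopeOn (extendF f.val) (Icc 0 1)) :
    rateI a b f = rateValue a b (extendF f.val) := by
  rw [rateI, if_pos (unitSlopeOn_iff.mp hf)]
  rfl

theorem rateI_eq_top {f : C0Sp} (hf : ¬UnitSlopeOn (extendF f.val) (Icc 0 1)) :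
    rateI a b f = ⊤ := by
  rw [rateI, if_neg (mt unitSlopeOn_iff.mpr hf)]

theorem rateValue_le_of_eqOn {F G : ℝ → ℝ} (ha : 0 ≤ a) (hb : 0 ≤ b) (hab : a * b < 1)
    (hη0 : 0 < η) (hη1 : η < 1) (hF : UnitSlopeOn F (Icc 0 1))
    (hG : EqOn G (fun t => (1 - η) * F t + η / 2 * t) (Icc 0 1)) :
    rateValue a b G ≤
      rateValue a b F + η * (4 - Real.log (1 / (1 + b)) - Real.log (1 - a / (1 + a))) := by
  have hα0 : 0 ≤ a / (1 + a) := by positivity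
  have hα1 : a / (1 + a) < 1 := (div_lt_one (by linarith)).mpr (by linarith)
  have hβ0 : 0 < 1 / (1 + b) := by positivity
  have hβ1 : 1 / (1 + b) ≤ 1 := (div_le_one (by linarith)).mpr (by linarith)
  have hαβ : a / (1 + a) ≤ 1 / (1 + b) := by
    rw [div_le_div_iff₀ (by linarith) (by linarith)]
    nlinarith
  have hEnt := integral_comp_deriv_le (by unfold Hent; fun_prop) (fun _ => abs_Hent_le)
    hη0.le hη1 (fun _ => Hent_perturb_le hη0 hη1.le) hF hG
  have henv : EqOn (convEnv G) (fun t => (1 - η) * convEnv F t + η / 2 * t) (Icc 0 1) := by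
    intro t ht
    rw [convEnv_congr (G := fun t => (1 - η) * F t + (η / 2 * t + 0)) fun s hs => by
      simp [hG hs], convEnv_mul_add (by linarith) hF.hasConvexMinorant ht, add_zero]
  have hLik := integral_comp_deriv_le (by unfold clampedLogLik bernoulliLogLik; fun_prop)
    (fun _ => abs_clampedLogLik_le hα0 hα1 hβ0 hβ1) hη0.le hη1
    (fun _ => clampedLogLik_perturb_le hα0 hα1 hβ0 hβ1 hαβ hη0 hη1.le) hF.convEnv henv
  unfold rateValue
  linarith

noncomputable def perturb (η : ℝ) (f : C0Sp) : C0Sp :=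
  ⟨⟨fun t => (1 - η) * f.val t + η / 2 * t, by fun_prop⟩, by
    simp only [ContinuousMap.coe_mk, f.2]
    ring⟩

theorem extendF_perturb (η : ℝ) (f : C0Sp) :
    EqOn (extendF (perturb η f).val) (fun t => (1 - η) * extendF f.val t + η / 2 * t)
      (Icc 0 1) := by
  intro t ht
  simp [extendF, perturb, projIcc_of_mem zero_le_one ht]

theorem rateI_perturb_le {f : C0Sp} (ha : 0 ≤ a) (hb : 0 ≤ b) (hab : a * b < 1)
    (hη0 : 0 < η) (hη1 : η < 1) (hf : UnitSlopeOn (extendF f.val) (Icc 0 1)) :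
    rateI a b (perturb η f) ≤ ((rateValue a b (extendF f.val) +
      η * (4 - Real.log (1 / (1 + b)) - Real.log (1 - a / (1 + a))) : ℝ) : EReal) := by
  rw [rateI_eq_rateValue ((hf.perturb hη0.le hη1.le).congr (extendF_perturb η f))]
  exact EReal.coe_le_coe_iff.mpr (rateValue_le_of_eqOn ha hb hab hη0 hη1 hf (extendF_perturb η f))

end RateFunction

section Cone

def openCone (k : ℕ) (θ : Fin (k + 1) → ℝ) : Set (Fin (k + 1) → ℝ) :=
  {x | (0 < x 0 ∧ x 0 < θ 0) ∧
    ∀ j : Fin k, 0 < x j.succ - x j.castSucc ∧ x j.succ - x j.castSucc < θ j.succ - θ j.castSucc}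

variable {k : ℕ} {θ : Fin (k + 1) → ℝ} {F : ℝ → ℝ} {η : ℝ}

theorem mul_add_half_mem_Ioo {g d : ℝ} (hg : g ∈ Icc 0 d) (hd : 0 < d) (hη0 : 0 < η)
    (hη1 : η < 1) : (1 - η) * g + η / 2 * d ∈ Ioo 0 d :=
  ⟨by nlinarith [hg.1], by nlinarith [hg.2]⟩

theorem perturb_mem_openCone (hF : UnitSlopeOn F (Icc 0 1)) (hF0 : F 0 = 0) (hθ0 : 0 < θ 0)
    (hθmono : StrictMono θ) (hθI : ∀ j, θ j ∈ Icc (0 : ℝ) 1) (hη0 : 0 < η) (hη1 : η < 1) :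
    (fun j => (1 - η) * F (θ j) + η / 2 * θ j) ∈ openCone k θ := by
  refine ⟨?_, fun j => ?_⟩
  · have := hF (left_mem_Icc.mpr zero_le_one) (hθI 0) (hθI 0).1
    rw [hF0, sub_zero, sub_zero] at this
    exact mul_add_half_mem_Ioo this hθ0 hη0 hη1
  · have hlt := hθmono (Fin.castSucc_lt_succ (i := j))
    obtain ⟨h1, h2⟩ := hF (hθI _) (hθI _) hlt.le
    have := mul_add_half_mem_Ioo ⟨sub_nonneg.mpr h1, h2⟩ (sub_pos.mpr hlt) hη0 hη1
    constructor <;> linarith [this.1, this.2]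

theorem perturb_mem_ball (hF : UnitSlopeOn F (Icc 0 1)) (hF0 : F 0 = 0)
    (hθI : ∀ j, θ j ∈ Icc (0 : ℝ) 1) {ε : ℝ} (hη0 : 0 ≤ η) (hηε : η < ε) :
    (fun j => (1 - η) * F (θ j) + η / 2 * θ j) ∈ Metric.ball (fun j => F (θ j)) ε := by
  rw [Metric.mem_ball, dist_pi_lt_iff (hη0.trans_lt hηε)]
  intro j
  obtain ⟨h1, h2⟩ := hF (left_mem_Icc.mpr zero_le_one) (hθI j) (hθI j).1
  simp only [hF0, sub_zero] at h1 h2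
  rw [Real.dist_eq, abs_lt]
  constructor <;>
    nlinarith [mul_nonneg hη0 h1, mul_nonneg hη0 (sub_nonneg.mpr h2),
      mul_nonneg hη0 (sub_nonneg.mpr (hθI j).2)]

end Cone

theorem extendF_zero (f : C0Sp) : extendF f.val 0 = 0 := by
  rw [extendF, projIcc_left]
  exact f.2

theorem tendsto_coe_add_mul_nhdsGT (r K : ℝ) :
    Tendsto (fun η : ℝ => ((r + η * K : ℝ) : EReal)) (𝓝[>] 0) (𝓝 (r : EReal)) := by
  have hcont : Continuous fun η : ℝ => r + η * K := by fun_prop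
  have : Tendsto (fun η : ℝ => r + η * K) (𝓝 0) (𝓝 r) := hcont.tendsto' 0 r (by simp)
  exact (continuous_coe_real_ereal.tendsto r).comp (this.mono_left nhdsWithin_le_nhds)

theorem stmt16_general (a b : ℝ) (ha : 0 ≤ a) (hb : 0 ≤ b) (hab : a * b < 1)
    (k : ℕ) (θ : Fin (k+1) → ℝ)
    (hθ0 : 0 < θ 0) (hθmono : StrictMono θ) (hθlast : θ (Fin.last k) = 1)
    (U : Set (Fin (k+1) → ℝ)) (hU : IsOpen U) :
    ⨅ x ∈ U, rateFd a b k θ x =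
      ⨅ x ∈ U ∩ {x : Fin (k+1) → ℝ |
        (0 < x 0 ∧ x 0 < θ 0) ∧
          ∀ j : Fin k, 0 < x j.succ - x j.castSucc ∧
            x j.succ - x j.castSucc < θ j.succ - θ j.castSucc},
        rateFd a b k θ x := by
  have hθI (j : Fin (k + 1)) : θ j ∈ Icc (0 : ℝ) 1 :=
    ⟨hθ0.le.trans (hθmono.monotone (Fin.zero_le j)), hθlast ▸ hθmono.monotone (Fin.le_last j)⟩
  refine le_antisymm (biInf_mono fun _ => And.left) (le_iInf₂ fun x hxU => le_iInf fun f => ?_)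
  obtain ⟨f, hfx⟩ := f
  obtain rfl : x = fun j => extendF f.val (θ j) := funext fun j => (hfx j).symm
  by_cases hf : UnitSlopeOn (extendF f.val) (Icc 0 1)
  swap
  · exact (rateI_eq_top hf).symm ▸ le_top
  obtain ⟨ε, hε, hball⟩ := Metric.isOpen_iff.mp hU _ hxU
  rw [rateI_eq_rateValue hf]
  refine ge_of_tendsto (tendsto_coe_add_mul_nhdsGT _
    (4 - Real.log (1 / (1 + b)) - Real.log (1 - a / (1 + a)))) ?_
  filter_upwards [Ioo_mem_nhdsGT (lt_min one_pos hε)] with η ⟨hη0, hη⟩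
  have hF0 := extendF_zero f
  calc _ ≤ rateFd a b k θ (fun j => (1 - η) * extendF f.val (θ j) + η / 2 * θ j) :=
        iInf₂_le _ (show _ ∈ U ∩ openCone k θ from
          ⟨hball (perturb_mem_ball hf hF0 hθI hη0.le (hη.trans_le (min_le_right _ _))),
            perturb_mem_openCone hf hF0 hθ0 hθmono hθI hη0 (hη.trans_le (min_le_left _ _))⟩)
    _ ≤ rateI a b (perturb η f) :=
        iInf_le_of_le ⟨perturb η f, fun j => extendF_perturb η f (hθI j)⟩ le_rfl
    _ ≤ _ := rateI_perturb_le ha hb hab hη0 (hη.trans_le (min_le_left _ _)) hf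

/-- Lemma 4.3: for any open `U ⊆ ℝ^{d+1}`, the infimum of the finite-dimensional rate function
over `U` equals its infimum over `U ∩ cone°`, where `cone°` is the open cone of strictly
increasing, strictly `1`-Lipschitz-compatible coordinate vectors. -/
theorem stmt16 (a b : ℝ) (ha : 0 ≤ a) (hb : 0 ≤ b) (hab : a * b < 1)
    (k : ℕ) (hk : 1 ≤ k) (θ : Fin (k+1) → ℝ)
    (hθ0 : 0 < θ 0) (hθmono : StrictMono θ) (hθlast : θ (Fin.last k) = 1)
    (U : Set (Fin (k+1) → ℝ)) (hU : IsOpen U) :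
    ⨅ x ∈ U, rateFd a b k θ x =
      ⨅ x ∈ U ∩ {x : Fin (k+1) → ℝ |
        (0 < x 0 ∧ x 0 < θ 0) ∧
          ∀ j : Fin k, 0 < x j.succ - x j.castSucc ∧
            x j.succ - x j.castSucc < θ j.succ - θ j.castSucc},
        rateFd a b k θ x :=
  stmt16_general a b ha hb hab k θ hθ0 hθmono hθlast U hU
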